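/- arXiv:1904.01291 — 6 statements merged into one kernel-verified Lean document; each statement's English description precedes it below -/
import Mathlib

section
/- Let m, n be real numbers with n ≠ 0, m + n ≠ 0. If u : ℝ × ℝ → ℝ is a smooth positive solution of the Rosenau–Hyman equation u_t + (u^m)_x + (u^n)_{xxx} = 0, then u^{n+1} is a conserved density with explicit flux: setting w = u^n, one has ∂_t(u^{n+1}) = ∂_x( -((n+1)m/(n+m)) u^{n+m} - (n+1)( w·w_{xx} - (1/2) w_x² ) ) at every point. -/
/-- Partial derivative in the first (space) variable. -/
noncomputable def pX (u : ℝ → ℝ → ℝ) : ℝ → ℝ → ℝ := fun x t => deriv (fun y => u y t) x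

/-- Partial derivative in the second (time) variable. -/
noncomputable def pT (u : ℝ → ℝ → ℝ) : ℝ → ℝ → ℝ := fun x t => deriv (fun s => u x s) t

open Function Real

private lemma pX_hasDerivAt {F : ℝ → ℝ → ℝ} (hF : ContDiff ℝ (⊤ : ℕ∞) (uncurry F)) (x t : ℝ) :
    HasDerivAt (fun y => F y t) (pX F x t) x := by
  have hline : HasDerivAt (fun y : ℝ => ((y, t) : ℝ × ℝ)) ((1 : ℝ), (0 : ℝ)) x :=
    (hasDerivAt_id x).prodMk (hasDerivAt_const x t)
  have h := ((hF.differentiable (by simp) (x, t)).hasFDerivAt).comp_hasDerivAt x hline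
  have hd : deriv (fun y => F y t) x = fderiv ℝ (uncurry F) (x, t) (1, 0) := h.deriv
  simp only [pX, hd]; exact h

private lemma pT_hasDerivAt {F : ℝ → ℝ → ℝ} (hF : ContDiff ℝ (⊤ : ℕ∞) (uncurry F)) (x t : ℝ) :
    HasDerivAt (fun s => F x s) (pT F x t) t := by
  have hline : HasDerivAt (fun s : ℝ => ((x, s) : ℝ × ℝ)) ((0 : ℝ), (1 : ℝ)) t :=
    (hasDerivAt_const t x).prodMk (hasDerivAt_id t)
  have h := ((hF.differentiable (by simp) (x, t)).hasFDerivAt).comp_hasDerivAt t hline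
  have hd : deriv (fun s => F x s) t = fderiv ℝ (uncurry F) (x, t) (0, 1) := h.deriv
  simp only [pT, hd]; exact h

private lemma contDiff_pX {F : ℝ → ℝ → ℝ} (hF : ContDiff ℝ (⊤ : ℕ∞) (uncurry F)) :
    ContDiff ℝ (⊤ : ℕ∞) (uncurry (pX F)) := by
  have heq : uncurry (pX F) = fun p : ℝ × ℝ => fderiv ℝ (uncurry F) p ((1 : ℝ), (0 : ℝ)) := by
    funext p
    obtain ⟨x, t⟩ := p
    have hline : HasDerivAt (fun y : ℝ => ((y, t) : ℝ × ℝ)) ((1 : ℝ), (0 : ℝ)) x :=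
      (hasDerivAt_id x).prodMk (hasDerivAt_const x t)
    have h := ((hF.differentiable (by simp) (x, t)).hasFDerivAt).comp_hasDerivAt x hline
    exact h.deriv
  rw [heq]
  exact (hF.fderiv_right (by simp)).clm_apply contDiff_const

theorem stmt0 (m n : ℝ) (hn : n ≠ 0) (hmn : m + n ≠ 0)
    (u : ℝ → ℝ → ℝ) (hu : ContDiff ℝ (⊤ : ℕ∞) (Function.uncurry u))
    (hpos : ∀ x t, 0 < u x t)
    (hpde : ∀ x t, pT u x t + pX (fun x t => u x t ^ m) x t
      + pX (pX (pX (fun x t => u x t ^ n))) x t = 0) :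
    ∀ x t, pT (fun x t => u x t ^ (n + 1)) x t
      = pX (fun x t => -((n + 1) * m / (n + m)) * u x t ^ (n + m)
          - (n + 1) * ((u x t ^ n) * pX (pX (fun x t => u x t ^ n)) x t
            - (1 / 2) * (pX (fun x t => u x t ^ n) x t) ^ 2)) x t := by
  intro x t
  have hne : u x t ≠ 0 := ne_of_gt (hpos x t)
  set w : ℝ → ℝ → ℝ := fun x t => u x t ^ n with hw_def
  have hw : ContDiff ℝ (⊤ : ℕ∞) (uncurry w) := by
    rw [contDiff_iff_contDiffAt]
    intro p
    exact (hu.contDiffAt).rpow_const_of_ne (ne_of_gt (hpos p.1 p.2))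
  have hw1 := contDiff_pX hw
  have hw2 := contDiff_pX hw1
  -- derivatives of u slices
  have hux : HasDerivAt (fun y => u y t) (pX u x t) x := pX_hasDerivAt hu x t
  have hut : HasDerivAt (fun s => u x s) (pT u x t) t := pT_hasDerivAt hu x t
  -- time derivative of u ^ (n+1)
  have hL : HasDerivAt (fun s => u x s ^ (n + 1)) (pT u x t * (n + 1) * u x t ^ n) t := by
    have h := hut.rpow_const (p := n + 1) (Or.inl hne)
    simpa [add_sub_cancel_right] using h
  have hLd : pT (fun x t => u x t ^ (n + 1)) x t = pT u x t * (n + 1) * u x t ^ n := hL.deriv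
  -- x derivative of u ^ m
  have hm : HasDerivAt (fun y => u y t ^ m) (pX u x t * m * u x t ^ (m - 1)) x :=
    hux.rpow_const (p := m) (Or.inl hne)
  have hmd : pX (fun x t => u x t ^ m) x t = pX u x t * m * u x t ^ (m - 1) := hm.deriv
  -- x derivative of u ^ (n+m)
  have hnm : HasDerivAt (fun y => u y t ^ (n + m)) (pX u x t * (n + m) * u x t ^ (n + m - 1)) x :=
    hux.rpow_const (p := n + m) (Or.inl hne)
  -- slice derivatives of w and its x-derivatives
  have h1 : HasDerivAt (fun y => w y t) (pX w x t) x := pX_hasDerivAt hw x t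
  have h2 : HasDerivAt (fun y => pX w y t) (pX (pX w) x t) x := pX_hasDerivAt hw1 x t
  have h3 : HasDerivAt (fun y => pX (pX w) y t) (pX (pX (pX w)) x t) x := pX_hasDerivAt hw2 x t
  -- derivative of the flux
  have hprod : HasDerivAt (fun y => w y t * pX (pX w) y t)
      (pX w x t * pX (pX w) x t + w x t * pX (pX (pX w)) x t) x := h1.mul h3
  have hsq : HasDerivAt (fun y => (pX w y t) ^ 2)
      ((2 : ℕ) * (pX w x t) ^ (2 - 1) * pX (pX w) x t) x := h2.pow 2
  have hR : HasDerivAt (fun y => -((n + 1) * m / (n + m)) * u y t ^ (n + m)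
      - (n + 1) * (w y t * pX (pX w) y t - (1 / 2) * (pX w y t) ^ 2))
      (-((n + 1) * m / (n + m)) * (pX u x t * (n + m) * u x t ^ (n + m - 1))
        - (n + 1) * ((pX w x t * pX (pX w) x t + w x t * pX (pX (pX w)) x t)
          - (1 / 2) * ((2 : ℕ) * (pX w x t) ^ (2 - 1) * pX (pX w) x t))) x :=
    ((hnm.const_mul _).sub ((hprod.sub (hsq.const_mul _)).const_mul _))
  have hRd : pX (fun y s => -((n + 1) * m / (n + m)) * u y s ^ (n + m)
      - (n + 1) * (w y s * pX (pX w) y s - (1 / 2) * (pX w y s) ^ 2)) x t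
      = -((n + 1) * m / (n + m)) * (pX u x t * (n + m) * u x t ^ (n + m - 1))
        - (n + 1) * ((pX w x t * pX (pX w) x t + w x t * pX (pX (pX w)) x t)
          - (1 / 2) * ((2 : ℕ) * (pX w x t) ^ (2 - 1) * pX (pX w) x t)) := hR.deriv
  -- use the PDE
  have hp := hpde x t
  rw [hmd] at hp
  have hut_eq : pT u x t = -(pX u x t * m * u x t ^ (m - 1)) - pX (pX (pX w)) x t := by
    linarith
  -- key power identity
  have hpow : u x t ^ (n + m - 1) = u x t ^ n * u x t ^ (m - 1) := by
    rw [← Real.rpow_add (hpos x t)]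
    ring_nf
  have hnm0 : n + m ≠ 0 := by
    intro h; exact hmn (by linarith)
  show pT (fun x t => u x t ^ (n + 1)) x t
      = pX (fun y s => -((n + 1) * m / (n + m)) * u y s ^ (n + m)
          - (n + 1) * (w y s * pX (pX w) y s - (1 / 2) * (pX w y s) ^ 2)) x t
  rw [hLd, hRd, hut_eq]
  have hwxt : w x t = u x t ^ n := rfl
  rw [hwxt, hpow]
  push_cast
  field_simp
  ring
end

section
/- If u : ℝ × ℝ → ℝ is a smooth solution of the K(2,2) equation u_t + (u²)_x + (u²)_{xxx} = 0, then ∂_t(u³) = ∂_x( -(3/2) u⁴ - 6 u³ u_{xx} ) at every point. In particular u³ is a conserved density of K(2,2). -/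
open scoped ContDiff


lemma key_onevar (f : ℝ → ℝ) (hf : ContDiff ℝ (⊤ : ℕ∞) f) (x : ℝ) :
    3 * f x ^ 2 * (-(deriv (fun y => f y ^ 2) x + deriv (deriv (deriv (fun y => f y ^ 2))) x))
      = deriv (fun y => -(3 / 2) * f y ^ 4 - 6 * f y ^ 3 * deriv (deriv f) y) x := by
  have hf' : ContDiff ℝ ∞ f := hf.of_le (by simp)
  have df : Differentiable ℝ f := hf'.differentiable (by simp)
  have hf1 : ContDiff ℝ ∞ (deriv f) := (contDiff_infty_iff_deriv.mp hf').2
  have df1 : Differentiable ℝ (deriv f) := hf1.differentiable (by simp)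
  have hf2 : ContDiff ℝ ∞ (deriv (deriv f)) := (contDiff_infty_iff_deriv.mp hf1).2
  have df2 : Differentiable ℝ (deriv (deriv f)) := hf2.differentiable (by simp)
  have hA : deriv (fun y => f y ^ 2) = fun y => 2 * f y * deriv f y := by
    funext y
    rw [deriv_fun_pow (df y) 2]
    norm_num
  have hB : deriv (fun y => 2 * f y * deriv f y) = fun y =>
      2 * deriv f y * deriv f y + 2 * f y * deriv (deriv f) y := by
    funext y
    rw [deriv_fun_mul ((df y).const_mul 2) (df1 y), deriv_const_mul 2 (df y)]
  have hC : deriv (fun y => 2 * deriv f y * deriv f y + 2 * f y * deriv (deriv f) y) x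
      = 2 * deriv (deriv f) x * deriv f x + 2 * deriv f x * deriv (deriv f) x
        + (2 * deriv f x * deriv (deriv f) x + 2 * f x * deriv (deriv (deriv f)) x) := by
    rw [deriv_fun_add (((df1 x).const_mul 2).fun_mul (df1 x)) (((df x).const_mul 2).fun_mul (df2 x)),
      deriv_fun_mul ((df1 x).const_mul 2) (df1 x), deriv_const_mul 2 (df1 x),
      deriv_fun_mul ((df x).const_mul 2) (df2 x), deriv_const_mul 2 (df x)]
  have hRHS : deriv (fun y => -(3 / 2) * f y ^ 4 - 6 * f y ^ 3 * deriv (deriv f) y) x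
      = -(3 / 2) * (4 * f x ^ 3 * deriv f x)
        - (6 * (3 * f x ^ 2 * deriv f x) * deriv (deriv f) x
          + 6 * f x ^ 3 * deriv (deriv (deriv f)) x) := by
    have d4 : DifferentiableAt ℝ (fun y => f y ^ 4) x := (df x).pow 4
    have d3 : DifferentiableAt ℝ (fun y => f y ^ 3) x := (df x).pow 3
    rw [deriv_fun_sub (d4.const_mul _) ((d3.const_mul 6).fun_mul (df2 x)),
      deriv_const_mul _ d4, deriv_fun_mul (d3.const_mul 6) (df2 x),
      deriv_const_mul 6 d3, deriv_fun_pow (df x) 4, deriv_fun_pow (df x) 3]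
    norm_num
  simp only [hA, hB, hC, hRHS]
  ring

theorem stmt1 (u : ℝ → ℝ → ℝ) (hu : ContDiff ℝ (⊤ : ℕ∞) (Function.uncurry u))
    (hpde : ∀ x t, pT u x t + pX (fun x t => (u x t) ^ 2) x t
      + pX (pX (pX (fun x t => (u x t) ^ 2))) x t = 0) :
    ∀ x t, pT (fun x t => (u x t) ^ 3) x t
      = pX (fun x t => -(3 / 2) * (u x t) ^ 4 - 6 * (u x t) ^ 3 * pX (pX u) x t) x t := by
  intro x t
  have hfx : ContDiff ℝ (⊤ : ℕ∞) (fun y => u y t) :=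
    hu.comp (contDiff_id.prodMk contDiff_const)
  have hft : ContDiff ℝ (⊤ : ℕ∞) (fun s => u x s) :=
    hu.comp (contDiff_const.prodMk contDiff_id)
  have dft : DifferentiableAt ℝ (fun s => u x s) t :=
    (hft.differentiable (by simp)) t
  -- unfold pT of u^3 via chain rule
  have hL : pT (fun x t => (u x t) ^ 3) x t = 3 * (u x t) ^ 2 * pT u x t := by
    simp only [pT]
    rw [deriv_fun_pow dft 3]
    norm_num
  -- from the PDE
  have hpde' : pT u x t = -(pX (fun x t => (u x t) ^ 2) x t
      + pX (pX (pX (fun x t => (u x t) ^ 2))) x t) := by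
    have := hpde x t; linarith
  rw [hL, hpde']
  exact key_onevar (fun y => u y t) hfx x
end

section
/- For any real constant c, the function u(x,t) = (4c/3) cos²((x - c t)/4) satisfies the K(2,2) equation u_t + (u²)_x + (u²)_{xxx} = 0 at every point (x,t) with |x - c t| < 2π. -/
/-- The Rosenau–Hyman compacton profile. -/
noncomputable def compacton (c : ℝ) : ℝ → ℝ → ℝ :=
  fun x t => (4 * c / 3) * (Real.cos ((x - c * t) / 4)) ^ 2

lemma lin_hasDerivAt (a x : ℝ) : HasDerivAt (fun y : ℝ => (y - a) / 4) (1 / 4) x := by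
  simpa using ((hasDerivAt_id x).sub_const a).div_const 4

lemma e1 (c : ℝ) : pX (fun x t => (compacton c x t) ^ 2) =
    fun x t => -(4 * c ^ 2 / 9) * Real.sin ((x - c * t) / 2)
      - (2 * c ^ 2 / 9) * Real.sin (x - c * t) := by
  funext x t
  have hc : HasDerivAt (fun y : ℝ => Real.cos ((y - c * t) / 4))
      (-Real.sin ((x - c * t) / 4) * (1 / 4)) x :=
    (Real.hasDerivAt_cos _).comp x (lin_hasDerivAt _ _)
  have hu : HasDerivAt (fun y : ℝ => compacton c y t)
      ((4 * c / 3) * (2 * Real.cos ((x - c * t) / 4) ^ 1 *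
        (-Real.sin ((x - c * t) / 4) * (1 / 4)))) x := by
    simpa [compacton] using (hc.pow 2).const_mul (4 * c / 3)
  have h2 : HasDerivAt (fun y : ℝ => (compacton c y t) ^ 2)
      (2 * (compacton c x t) ^ 1 * ((4 * c / 3) * (2 * Real.cos ((x - c * t) / 4) ^ 1 *
        (-Real.sin ((x - c * t) / 4) * (1 / 4))))) x := hu.pow 2
  have := h2.deriv
  rw [pX, this]
  have hs2 : Real.sin ((x - c * t) / 2) =
      2 * Real.sin ((x - c * t) / 4) * Real.cos ((x - c * t) / 4) := by
    rw [show (x - c * t) / 2 = 2 * ((x - c * t) / 4) by ring, Real.sin_two_mul]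
  have hs4 := Real.sin_two_mul ((x - c * t) / 2)
  rw [show 2 * ((x - c * t) / 2) = x - c * t by ring] at hs4
  have hc2 : Real.cos ((x - c * t) / 2) = 2 * Real.cos ((x - c * t) / 4) ^ 2 - 1 := by
    rw [show (x - c * t) / 2 = 2 * ((x - c * t) / 4) by ring, Real.cos_two_mul]
  rw [hs4, hs2, hc2, compacton]
  ring

lemma e2 (c : ℝ) : pX (fun x t => -(4 * c ^ 2 / 9) * Real.sin ((x - c * t) / 2)
      - (2 * c ^ 2 / 9) * Real.sin (x - c * t)) =
    fun x t => -(2 * c ^ 2 / 9) * Real.cos ((x - c * t) / 2)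
      - (2 * c ^ 2 / 9) * Real.cos (x - c * t) := by
  funext x t
  have h1 : HasDerivAt (fun y : ℝ => (y - c * t) / 2) (1 / 2) x := by
    simpa using ((hasDerivAt_id x).sub_const (c * t)).div_const 2
  have h2 : HasDerivAt (fun y : ℝ => y - c * t) 1 x := (hasDerivAt_id x).sub_const _
  have hA : HasDerivAt (fun y : ℝ => -(4 * c ^ 2 / 9) * Real.sin ((y - c * t) / 2))
      (-(4 * c ^ 2 / 9) * (Real.cos ((x - c * t) / 2) * (1 / 2))) x :=
    ((Real.hasDerivAt_sin _).comp x h1).const_mul _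
  have hB : HasDerivAt (fun y : ℝ => (2 * c ^ 2 / 9) * Real.sin (y - c * t))
      ((2 * c ^ 2 / 9) * (Real.cos (x - c * t) * 1)) x :=
    ((Real.hasDerivAt_sin _).comp x h2).const_mul _
  have := (hA.sub hB).deriv
  rw [pX]; exact this.trans (by ring)

lemma e3 (c : ℝ) : pX (fun x t => -(2 * c ^ 2 / 9) * Real.cos ((x - c * t) / 2)
      - (2 * c ^ 2 / 9) * Real.cos (x - c * t)) =
    fun x t => (c ^ 2 / 9) * Real.sin ((x - c * t) / 2)
      + (2 * c ^ 2 / 9) * Real.sin (x - c * t) := by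
  funext x t
  have h1 : HasDerivAt (fun y : ℝ => (y - c * t) / 2) (1 / 2) x := by
    simpa using ((hasDerivAt_id x).sub_const (c * t)).div_const 2
  have h2 : HasDerivAt (fun y : ℝ => y - c * t) 1 x := (hasDerivAt_id x).sub_const _
  have hA : HasDerivAt (fun y : ℝ => -(2 * c ^ 2 / 9) * Real.cos ((y - c * t) / 2))
      (-(2 * c ^ 2 / 9) * (-Real.sin ((x - c * t) / 2) * (1 / 2))) x :=
    ((Real.hasDerivAt_cos _).comp x h1).const_mul _
  have hB : HasDerivAt (fun y : ℝ => (2 * c ^ 2 / 9) * Real.cos (y - c * t))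
      ((2 * c ^ 2 / 9) * (-Real.sin (x - c * t) * 1)) x :=
    ((Real.hasDerivAt_cos _).comp x h2).const_mul _
  have := (hA.sub hB).deriv
  rw [pX]; exact this.trans (by ring)

theorem stmt2 (c x t : ℝ) (h : |x - c * t| < 2 * Real.pi) :
    pT (compacton c) x t + pX (fun x t => (compacton c x t) ^ 2) x t
      + pX (pX (pX (fun x t => (compacton c x t) ^ 2))) x t = 0 := by
  have hT : pT (compacton c) x t = (c ^ 2 / 3) * Real.sin ((x - c * t) / 2) := by
    have hin : HasDerivAt (fun s : ℝ => (x - c * s) / 4) (-c / 4) t := by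
      have : HasDerivAt (fun s : ℝ => x - c * s) (-c) t := by
        simpa using ((hasDerivAt_id t).const_mul c).const_sub x
      simpa using this.div_const 4
    have hc : HasDerivAt (fun s : ℝ => Real.cos ((x - c * s) / 4))
        (-Real.sin ((x - c * t) / 4) * (-c / 4)) t :=
      (Real.hasDerivAt_cos _).comp t hin
    have hu : HasDerivAt (fun s : ℝ => compacton c x s)
        ((4 * c / 3) * (2 * Real.cos ((x - c * t) / 4) ^ 1 *
          (-Real.sin ((x - c * t) / 4) * (-c / 4)))) t := by
      simpa [compacton] using (hc.pow 2).const_mul (4 * c / 3)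
    rw [pT, hu.deriv]
    rw [show (x - c * t) / 2 = 2 * ((x - c * t) / 4) by ring, Real.sin_two_mul]
    ring
  rw [e1, e2, e3]
  simp only [hT]
  ring
end

section
/- Let a ≠ 0 be a real constant and let u : ℝ × ℝ → ℝ be a smooth positive solution of u_t = a u_{xxx}/u³ - 6a u_x u_{xx}/u⁴ + 6a u_x³/u⁵. Set F(u, u_x, u_{xx}, u_{xxx}) = a u_{xxx}/u³ - 6a u_x u_{xx}/u⁴ + 6a u_x³/u⁵ and G = x u + (1/2) x² u_x. Then G satisfies the linearized symmetry equation D_t G = (∂F/∂u) G + (∂F/∂u_x) D_x G + (∂F/∂u_{xx}) D_x² G + (∂F/∂u_{xxx}) D_x³ G at every point, where D_t G is computed using the PDE and its x-differentiated consequences. Hence the vector field x u ∂_u - (1/2) x² ∂_x generates a Lie point symmetry of the equation. -/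
open Function

lemma sliceX_contDiff {f : ℝ → ℝ → ℝ} (hf : ContDiff ℝ (⊤ : ℕ∞) (uncurry f)) (t : ℝ) :
    ContDiff ℝ (⊤ : ℕ∞) (fun y => f y t) :=
  hf.comp (contDiff_id.prodMk contDiff_const)

lemma sliceT_contDiff {f : ℝ → ℝ → ℝ} (hf : ContDiff ℝ (⊤ : ℕ∞) (uncurry f)) (x : ℝ) :
    ContDiff ℝ (⊤ : ℕ∞) (fun s => f x s) :=
  hf.comp (contDiff_const.prodMk contDiff_id)

lemma hasDerivAt_pX {f : ℝ → ℝ → ℝ} (hf : ContDiff ℝ (⊤ : ℕ∞) (uncurry f)) (x t : ℝ) :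
    HasDerivAt (fun y => f y t) (pX f x t) x :=
  ((sliceX_contDiff hf t).differentiable (by simp) x).hasDerivAt

lemma hasDerivAt_pT {f : ℝ → ℝ → ℝ} (hf : ContDiff ℝ (⊤ : ℕ∞) (uncurry f)) (x t : ℝ) :
    HasDerivAt (fun s => f x s) (pT f x t) t :=
  ((sliceT_contDiff hf x).differentiable (by simp) t).hasDerivAt

lemma pX_eq_fderiv {f : ℝ → ℝ → ℝ} (hf : ContDiff ℝ (⊤ : ℕ∞) (uncurry f)) (x t : ℝ) :
    pX f x t = fderiv ℝ (uncurry f) (x, t) (1, 0) := by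
  have h1 : HasDerivAt (fun y => ((y, t) : ℝ × ℝ)) (1, 0) x :=
    (hasDerivAt_id x).prodMk (hasDerivAt_const x t)
  have h2 : HasFDerivAt (uncurry f) (fderiv ℝ (uncurry f) (x, t)) (x, t) :=
    (hf.differentiable (by simp) (x, t)).hasFDerivAt
  have h3 := h2.comp_hasDerivAt x h1
  exact h3.deriv.symm ▸ rfl

lemma pT_eq_fderiv {f : ℝ → ℝ → ℝ} (hf : ContDiff ℝ (⊤ : ℕ∞) (uncurry f)) (x t : ℝ) :
    pT f x t = fderiv ℝ (uncurry f) (x, t) (0, 1) := by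
  have h1 : HasDerivAt (fun s => ((x, s) : ℝ × ℝ)) (0, 1) t :=
    (hasDerivAt_const t x).prodMk (hasDerivAt_id t)
  have h2 : HasFDerivAt (uncurry f) (fderiv ℝ (uncurry f) (x, t)) (x, t) :=
    (hf.differentiable (by simp) (x, t)).hasFDerivAt
  have h3 := h2.comp_hasDerivAt t h1
  exact h3.deriv.symm ▸ rfl

lemma contDiff_pX_s9 {f : ℝ → ℝ → ℝ} (hf : ContDiff ℝ (⊤ : ℕ∞) (uncurry f)) :
    ContDiff ℝ (⊤ : ℕ∞) (uncurry (pX f)) := by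
  have h : uncurry (pX f) = fun p : ℝ × ℝ => fderiv ℝ (uncurry f) p (1, 0) := by
    funext p
    exact pX_eq_fderiv hf p.1 p.2
  rw [h]
  exact (ContinuousLinearMap.apply ℝ ℝ ((1 : ℝ), (0 : ℝ))).contDiff.comp
    (hf.fderiv_right (by simp))

lemma pT_pX_comm {f : ℝ → ℝ → ℝ} (hf : ContDiff ℝ (⊤ : ℕ∞) (uncurry f)) (x t : ℝ) :
    pT (pX f) x t = pX (pT f) x t := by
  have hDdiff : Differentiable ℝ (fun p => fderiv ℝ (uncurry f) p) :=
    (hf.fderiv_right (m := (⊤ : ℕ∞)) (by simp)).differentiable (by simp)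
  have hH : HasFDerivAt (fun p => fderiv ℝ (uncurry f) p)
      (fderiv ℝ (fun p => fderiv ℝ (uncurry f) p) (x, t)) (x, t) :=
    (hDdiff (x, t)).hasFDerivAt
  set H := fderiv ℝ (fun p => fderiv ℝ (uncurry f) p) (x, t) with hHdef
  have hsymm : ∀ v w, H v w = H w v :=
    second_derivative_symmetric (fun p => (hf.differentiable (by simp) p).hasFDerivAt) hH
  have e1 : pT (pX f) x t = H (0, 1) (1, 0) := by
    have hline : HasDerivAt (fun s => ((x, s) : ℝ × ℝ)) (0, 1) t :=
      (hasDerivAt_const t x).prodMk (hasDerivAt_id t)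
    have happ : HasFDerivAt (fun p : ℝ × ℝ => fderiv ℝ (uncurry f) p ((1 : ℝ), (0 : ℝ)))
        ((ContinuousLinearMap.apply ℝ ℝ ((1 : ℝ), (0 : ℝ))).comp H) (x, t) :=
      (ContinuousLinearMap.apply ℝ ℝ ((1 : ℝ), (0 : ℝ))).hasFDerivAt.comp (x, t) hH
    have hcomp := happ.comp_hasDerivAt t hline
    have heq : (fun s => pX f x s) = fun s => fderiv ℝ (uncurry f) (x, s) (1, 0) := by
      funext s; exact pX_eq_fderiv hf x s
    show deriv (fun s => pX f x s) t = H (0, 1) (1, 0)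
    rw [heq]
    exact hcomp.deriv
  have e2 : pX (pT f) x t = H (1, 0) (0, 1) := by
    have hline : HasDerivAt (fun y => ((y, t) : ℝ × ℝ)) (1, 0) x :=
      (hasDerivAt_id x).prodMk (hasDerivAt_const x t)
    have happ : HasFDerivAt (fun p : ℝ × ℝ => fderiv ℝ (uncurry f) p ((0 : ℝ), (1 : ℝ)))
        ((ContinuousLinearMap.apply ℝ ℝ ((0 : ℝ), (1 : ℝ))).comp H) (x, t) :=
      (ContinuousLinearMap.apply ℝ ℝ ((0 : ℝ), (1 : ℝ))).hasFDerivAt.comp (x, t) hH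
    have hcomp := happ.comp_hasDerivAt x hline
    have heq : (fun y => pT f y t) = fun y => fderiv ℝ (uncurry f) (y, t) (0, 1) := by
      funext y; exact pT_eq_fderiv hf y t
    show deriv (fun y => pT f y t) x = H (1, 0) (0, 1)
    rw [heq]
    exact hcomp.deriv
  rw [e1, e2, hsymm]

theorem stmt9 (a : ℝ) (ha : a ≠ 0)
    (u : ℝ → ℝ → ℝ) (hu : ContDiff ℝ (⊤ : ℕ∞) (Function.uncurry u))
    (hpos : ∀ x t, 0 < u x t)
    (F : ℝ → ℝ → ℝ → ℝ → ℝ)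
    (hF : ∀ z0 z1 z2 z3, F z0 z1 z2 z3
      = a * z3 / z0 ^ 3 - 6 * a * z1 * z2 / z0 ^ 4 + 6 * a * z1 ^ 3 / z0 ^ 5)
    (hpde : ∀ x t, pT u x t
      = F (u x t) (pX u x t) (pX (pX u) x t) (pX (pX (pX u)) x t))
    (G : ℝ → ℝ → ℝ)
    (hG : ∀ x t, G x t = x * u x t + (1 / 2) * x ^ 2 * pX u x t) :
    ∀ x t, pT G x t
      = deriv (fun z => F z (pX u x t) (pX (pX u) x t) (pX (pX (pX u)) x t)) (u x t) * G x t
      + deriv (fun z => F (u x t) z (pX (pX u) x t) (pX (pX (pX u)) x t)) (pX u x t) * pX G x t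
      + deriv (fun z => F (u x t) (pX u x t) z (pX (pX (pX u)) x t)) (pX (pX u) x t)
          * pX (pX G) x t
      + deriv (fun z => F (u x t) (pX u x t) (pX (pX u) x t) z) (pX (pX (pX u)) x t)
          * pX (pX (pX G)) x t := by
  have h1 : ContDiff ℝ (⊤ : ℕ∞) (Function.uncurry (pX u)) := contDiff_pX_s9 hu
  have h2 : ContDiff ℝ (⊤ : ℕ∞) (Function.uncurry (pX (pX u))) := contDiff_pX_s9 h1
  have h3 : ContDiff ℝ (⊤ : ℕ∞) (Function.uncurry (pX (pX (pX u)))) := contDiff_pX_s9 h2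
  -- first spatial derivative of G
  have hGx : ∀ x t, pX G x t
      = u x t + 2 * x * pX u x t + (1 / 2) * x ^ 2 * pX (pX u) x t := by
    intro x t
    have hslice : (fun y => G y t) = fun y => y * u y t + (1 / 2) * y ^ 2 * pX u y t := by
      funext y; rw [hG]
    have hd : HasDerivAt (fun y => y * u y t + (1 / 2) * y ^ 2 * pX u y t)
        ((1 * u x t + x * pX u x t)
          + (((1 / 2) * (↑(2 : ℕ) * x ^ (2 - 1))) * pX u x t
            + ((1 / 2) * x ^ 2) * pX (pX u) x t)) x :=
      ((hasDerivAt_id x).mul (hasDerivAt_pX hu x t)).add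
        (((hasDerivAt_pow 2 x).const_mul (1 / 2)).mul (hasDerivAt_pX h1 x t))
    show deriv (fun y => G y t) x = _
    rw [hslice, hd.deriv]
    push_cast
    ring
  -- second spatial derivative of G
  have hGxx : ∀ x t, pX (pX G) x t
      = 3 * pX u x t + 3 * x * pX (pX u) x t + (1 / 2) * x ^ 2 * pX (pX (pX u)) x t := by
    intro x t
    have hslice : (fun y => pX G y t)
        = fun y => u y t + 2 * y * pX u y t + (1 / 2) * y ^ 2 * pX (pX u) y t := by
      funext y; exact hGx y t
    have hd : HasDerivAt
        (fun y => u y t + 2 * y * pX u y t + (1 / 2) * y ^ 2 * pX (pX u) y t)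
        ((pX u x t + ((2 * 1) * pX u x t + (2 * x) * pX (pX u) x t))
          + (((1 / 2) * (↑(2 : ℕ) * x ^ (2 - 1))) * pX (pX u) x t
            + ((1 / 2) * x ^ 2) * pX (pX (pX u)) x t)) x :=
      ((hasDerivAt_pX hu x t).add
        (((hasDerivAt_id x).const_mul 2).mul (hasDerivAt_pX h1 x t))).add
        (((hasDerivAt_pow 2 x).const_mul (1 / 2)).mul (hasDerivAt_pX h2 x t))
    show deriv (fun y => pX G y t) x = _
    rw [hslice, hd.deriv]
    push_cast
    ring
  -- third spatial derivative of G
  have hGxxx : ∀ x t, pX (pX (pX G)) x t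
      = 6 * pX (pX u) x t + 4 * x * pX (pX (pX u)) x t
        + (1 / 2) * x ^ 2 * pX (pX (pX (pX u))) x t := by
    intro x t
    have hslice : (fun y => pX (pX G) y t)
        = fun y => 3 * pX u y t + 3 * y * pX (pX u) y t
            + (1 / 2) * y ^ 2 * pX (pX (pX u)) y t := by
      funext y; exact hGxx y t
    have hd : HasDerivAt
        (fun y => 3 * pX u y t + 3 * y * pX (pX u) y t
          + (1 / 2) * y ^ 2 * pX (pX (pX u)) y t)
        ((3 * pX (pX u) x t + ((3 * 1) * pX (pX u) x t + (3 * x) * pX (pX (pX u)) x t))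
          + (((1 / 2) * (↑(2 : ℕ) * x ^ (2 - 1))) * pX (pX (pX u)) x t
            + ((1 / 2) * x ^ 2) * pX (pX (pX (pX u))) x t)) x :=
      (((hasDerivAt_pX h1 x t).const_mul 3).add
        (((hasDerivAt_id x).const_mul 3).mul (hasDerivAt_pX h2 x t))).add
        (((hasDerivAt_pow 2 x).const_mul (1 / 2)).mul (hasDerivAt_pX h3 x t))
    show deriv (fun y => pX (pX G) y t) x = _
    rw [hslice, hd.deriv]
    push_cast
    ring
  intro x t
  set s0 := u x t with hs0
  set s1 := pX u x t with hs1
  set s2 := pX (pX u) x t with hs2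
  set s3 := pX (pX (pX u)) x t with hs3
  set s4 := pX (pX (pX (pX u))) x t with hs4
  have hne : s0 ≠ 0 := (hpos x t).ne'
  -- time derivative of G
  have hGt : pT G x t = x * pT u x t + (1 / 2) * x ^ 2 * pT (pX u) x t := by
    have hslice : (fun s => G x s) = fun s => x * u x s + (1 / 2) * x ^ 2 * pX u x s := by
      funext s; rw [hG]
    have hd : HasDerivAt (fun s => x * u x s + (1 / 2) * x ^ 2 * pX u x s)
        (x * pT u x t + ((1 / 2) * x ^ 2) * pT (pX u) x t) t :=
      ((hasDerivAt_pT hu x t).const_mul x).add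
        ((hasDerivAt_pT h1 x t).const_mul ((1 / 2) * x ^ 2))
    show deriv (fun s => G x s) t = _
    rw [hslice, hd.deriv]
  -- pT (pX u) via Clairaut and the PDE
  have hcomm : pT (pX u) x t = pX (pT u) x t := pT_pX_comm hu x t
  have hptx : pX (pT u) x t
      = ((a * s4 * s0 ^ 3 - a * s3 * (↑(3 : ℕ) * s0 ^ (3 - 1) * s1)) / (s0 ^ 3) ^ 2
          - ((6 * a * s2 * s2 + (6 * a * s1) * s3) * s0 ^ 4
              - 6 * a * s1 * s2 * (↑(4 : ℕ) * s0 ^ (4 - 1) * s1)) / (s0 ^ 4) ^ 2)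
        + ((6 * a * (↑(3 : ℕ) * s1 ^ (3 - 1) * s2)) * s0 ^ 5
            - 6 * a * s1 ^ 3 * (↑(5 : ℕ) * s0 ^ (5 - 1) * s1)) / (s0 ^ 5) ^ 2 := by
    have hslice : (fun y => pT u y t)
        = fun y => a * pX (pX (pX u)) y t / (u y t) ^ 3
            - 6 * a * pX u y t * pX (pX u) y t / (u y t) ^ 4
            + 6 * a * (pX u y t) ^ 3 / (u y t) ^ 5 := by
      funext y; rw [hpde, hF]
    have hA : HasDerivAt (fun y => a * pX (pX (pX u)) y t / (u y t) ^ 3)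
        ((a * s4 * s0 ^ 3 - a * s3 * (↑(3 : ℕ) * s0 ^ (3 - 1) * s1)) / (s0 ^ 3) ^ 2) x :=
      ((hasDerivAt_pX h3 x t).const_mul a).div ((hasDerivAt_pX hu x t).pow 3)
        (pow_ne_zero 3 hne)
    have hB : HasDerivAt (fun y => 6 * a * pX u y t * pX (pX u) y t / (u y t) ^ 4)
        (((6 * a * s2 * s2 + (6 * a * s1) * s3) * s0 ^ 4
          - 6 * a * s1 * s2 * (↑(4 : ℕ) * s0 ^ (4 - 1) * s1)) / (s0 ^ 4) ^ 2) x := by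
      have hnum : HasDerivAt (fun y => 6 * a * pX u y t * pX (pX u) y t)
          (6 * a * s2 * s2 + (6 * a * s1) * s3) x :=
        (((hasDerivAt_pX h1 x t).const_mul (6 * a)).mul (hasDerivAt_pX h2 x t))
      exact hnum.div ((hasDerivAt_pX hu x t).pow 4) (pow_ne_zero 4 hne)
    have hC : HasDerivAt (fun y => 6 * a * (pX u y t) ^ 3 / (u y t) ^ 5)
        (((6 * a * (↑(3 : ℕ) * s1 ^ (3 - 1) * s2)) * s0 ^ 5
          - 6 * a * s1 ^ 3 * (↑(5 : ℕ) * s0 ^ (5 - 1) * s1)) / (s0 ^ 5) ^ 2) x :=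
      (((hasDerivAt_pX h1 x t).pow 3).const_mul (6 * a)).div
        ((hasDerivAt_pX hu x t).pow 5) (pow_ne_zero 5 hne)
    show deriv (fun y => pT u y t) x = _
    rw [hslice]
    exact ((hA.sub hB).add hC).deriv
  -- derivatives of the four sections of F
  have hd0 : deriv (fun z => F z s1 s2 s3) s0
      = ((0 * s0 ^ 3 - a * s3 * (↑(3 : ℕ) * s0 ^ (3 - 1))) / (s0 ^ 3) ^ 2
          - (0 * s0 ^ 4 - 6 * a * s1 * s2 * (↑(4 : ℕ) * s0 ^ (4 - 1))) / (s0 ^ 4) ^ 2)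
        + (0 * s0 ^ 5 - 6 * a * s1 ^ 3 * (↑(5 : ℕ) * s0 ^ (5 - 1))) / (s0 ^ 5) ^ 2 := by
    simp only [hF]
    have hA := (hasDerivAt_const s0 (a * s3)).div (hasDerivAt_pow 3 s0) (pow_ne_zero 3 hne)
    have hB := (hasDerivAt_const s0 (6 * a * s1 * s2)).div (hasDerivAt_pow 4 s0)
      (pow_ne_zero 4 hne)
    have hC := (hasDerivAt_const s0 (6 * a * s1 ^ 3)).div (hasDerivAt_pow 5 s0)
      (pow_ne_zero 5 hne)
    exact ((hA.sub hB).add hC).deriv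
  have hd1 : deriv (fun z => F s0 z s2 s3) s1
      = (0 - (6 * a * 1) * s2 / s0 ^ 4) + 6 * a * (↑(3 : ℕ) * s1 ^ (3 - 1)) / s0 ^ 5 := by
    simp only [hF]
    have hA : HasDerivAt (fun z : ℝ => a * s3 / s0 ^ 3) 0 s1 := hasDerivAt_const s1 _
    have hB : HasDerivAt (fun z : ℝ => 6 * a * z * s2 / s0 ^ 4) ((6 * a * 1) * s2 / s0 ^ 4) s1 :=
      (((hasDerivAt_id s1).const_mul (6 * a)).mul_const s2).div_const (s0 ^ 4)
    have hC : HasDerivAt (fun z : ℝ => 6 * a * z ^ 3 / s0 ^ 5)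
        (6 * a * (↑(3 : ℕ) * s1 ^ (3 - 1)) / s0 ^ 5) s1 :=
      ((hasDerivAt_pow 3 s1).const_mul (6 * a)).div_const (s0 ^ 5)
    exact ((hA.sub hB).add hC).deriv
  have hd2 : deriv (fun z => F s0 s1 z s3) s2
      = (0 - (6 * a * s1) * 1 / s0 ^ 4) + 0 := by
    simp only [hF]
    have hA : HasDerivAt (fun z : ℝ => a * s3 / s0 ^ 3) 0 s2 := hasDerivAt_const s2 _
    have hB : HasDerivAt (fun z : ℝ => 6 * a * s1 * z / s0 ^ 4) ((6 * a * s1) * 1 / s0 ^ 4) s2 :=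
      (((hasDerivAt_id s2).const_mul (6 * a * s1))).div_const (s0 ^ 4)
    have hC : HasDerivAt (fun z : ℝ => 6 * a * s1 ^ 3 / s0 ^ 5) 0 s2 := hasDerivAt_const s2 _
    exact ((hA.sub hB).add hC).deriv
  have hd3 : deriv (fun z => F s0 s1 s2 z) s3
      = (a * 1 / s0 ^ 3 - 0) + 0 := by
    simp only [hF]
    have hA : HasDerivAt (fun z : ℝ => a * z / s0 ^ 3) (a * 1 / s0 ^ 3) s3 :=
      ((hasDerivAt_id s3).const_mul a).div_const (s0 ^ 3)
    have hB : HasDerivAt (fun z : ℝ => 6 * a * s1 * s2 / s0 ^ 4) 0 s3 := hasDerivAt_const s3 _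
    have hC : HasDerivAt (fun z : ℝ => 6 * a * s1 ^ 3 / s0 ^ 5) 0 s3 := hasDerivAt_const s3 _
    exact ((hA.sub hB).add hC).deriv
  rw [hGt, hcomm, hptx, hpde x t, hF, hd0, hd1, hd2, hd3, hG x t, hGx x t, hGxx x t, hGxxx x t]
  rw [← hs0, ← hs1, ← hs2, ← hs3, ← hs4]
  push_cast
  field_simp
  ring
end

section
/- Let a ≠ 0, β₃ ∈ ℝ, λ > 0. If u : ℝ × ℝ → ℝ is a smooth positive solution of u_t = a u_{xxx}/u⁶ - 12a u_x u_{xx}/u⁷ + 21a u_x³/u⁸ + β₃ u_x, then v(x,t) := u( λx + β₃(λ - λ³)t , λ³ t ) is also a solution of the same equation. -/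
private lemma hasDerivAt_slice_x {G : ℝ × ℝ → ℝ} (hG : ContDiff ℝ (⊤ : ℕ∞) G) (x t : ℝ) :
    HasDerivAt (fun y => G (y, t)) (fderiv ℝ G (x, t) (1, 0)) x := by
  have h1 : HasDerivAt (fun y : ℝ => (y, t)) ((1 : ℝ), (0 : ℝ)) x :=
    HasDerivAt.prodMk (hasDerivAt_id x) (hasDerivAt_const x t)
  exact ((hG.differentiable (by simp) (x, t)).hasFDerivAt).comp_hasDerivAt x h1

private lemma hasDerivAt_scaled_x {G : ℝ × ℝ → ℝ} (hG : ContDiff ℝ (⊤ : ℕ∞) G) (L c x t : ℝ) :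
    HasDerivAt (fun y => G (L * y + c * t, L ^ 3 * t))
      (L * fderiv ℝ G (L * x + c * t, L ^ 3 * t) (1, 0)) x := by
  have h1 : HasDerivAt (fun y : ℝ => (L * y + c * t, L ^ 3 * t)) ((L : ℝ), (0 : ℝ)) x := by
    have h := HasDerivAt.prodMk (((hasDerivAt_id x).const_mul L).add_const (c * t))
      (hasDerivAt_const x (L ^ 3 * t))
    simpa using h
  have h2 := ((hG.differentiable (by simp) (L * x + c * t, L ^ 3 * t)).hasFDerivAt).comp_hasDerivAt x h1
  have h3 : (fderiv ℝ G (L * x + c * t, L ^ 3 * t)) ((L : ℝ), (0 : ℝ))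
      = L * fderiv ℝ G (L * x + c * t, L ^ 3 * t) (1, 0) := by
    have he : ((L : ℝ), (0 : ℝ)) = L • ((1 : ℝ), (0 : ℝ)) := by simp
    rw [he, ContinuousLinearMap.map_smul, smul_eq_mul]
  rwa [h3] at h2

private lemma hasDerivAt_scaled_t {G : ℝ × ℝ → ℝ} (hG : ContDiff ℝ (⊤ : ℕ∞) G) (L c x t : ℝ) :
    HasDerivAt (fun s => G (L * x + c * s, L ^ 3 * s))
      (c * fderiv ℝ G (L * x + c * t, L ^ 3 * t) (1, 0)
        + L ^ 3 * fderiv ℝ G (L * x + c * t, L ^ 3 * t) (0, 1)) t := by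
  have h1 : HasDerivAt (fun s : ℝ => (L * x + c * s, L ^ 3 * s)) ((c : ℝ), (L ^ 3 : ℝ)) t := by
    have h := HasDerivAt.prodMk (((hasDerivAt_id t).const_mul c).const_add (L * x))
      ((hasDerivAt_id t).const_mul (L ^ 3))
    simpa using h
  have h2 := ((hG.differentiable (by simp) (L * x + c * t, L ^ 3 * t)).hasFDerivAt).comp_hasDerivAt t h1
  have h3 : (fderiv ℝ G (L * x + c * t, L ^ 3 * t)) ((c : ℝ), (L ^ 3 : ℝ))
      = c * fderiv ℝ G (L * x + c * t, L ^ 3 * t) (1, 0)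
        + L ^ 3 * fderiv ℝ G (L * x + c * t, L ^ 3 * t) (0, 1) := by
    have he : ((c : ℝ), (L ^ 3 : ℝ)) = c • ((1 : ℝ), (0 : ℝ)) + (L ^ 3) • ((0 : ℝ), (1 : ℝ)) := by
      simp
    rw [he, map_add, ContinuousLinearMap.map_smul, ContinuousLinearMap.map_smul,
      smul_eq_mul, smul_eq_mul]
  rwa [h3] at h2

private lemma hasDerivAt_slice_t {G : ℝ × ℝ → ℝ} (hG : ContDiff ℝ (⊤ : ℕ∞) G) (x t : ℝ) :
    HasDerivAt (fun s => G (x, s)) (fderiv ℝ G (x, t) (0, 1)) t := by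
  have h1 : HasDerivAt (fun s : ℝ => (x, s)) ((0 : ℝ), (1 : ℝ)) t :=
    HasDerivAt.prodMk (hasDerivAt_const t x) (hasDerivAt_id t)
  exact ((hG.differentiable (by simp) (x, t)).hasFDerivAt).comp_hasDerivAt t h1

theorem stmt11 (a β₃ L : ℝ) (ha : a ≠ 0) (hL : 0 < L)
    (u : ℝ → ℝ → ℝ) (hu : ContDiff ℝ (⊤ : ℕ∞) (Function.uncurry u))
    (hpos : ∀ x t, 0 < u x t)
    (hpde : ∀ x t, pT u x t
      = a * pX (pX (pX u)) x t / (u x t) ^ 6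
        - 12 * a * pX u x t * pX (pX u) x t / (u x t) ^ 7
        + 21 * a * (pX u x t) ^ 3 / (u x t) ^ 8 + β₃ * pX u x t)
    (v : ℝ → ℝ → ℝ)
    (hv : ∀ x t, v x t = u (L * x + β₃ * (L - L ^ 3) * t) (L ^ 3 * t)) :
    ∀ x t, pT v x t
      = a * pX (pX (pX v)) x t / (v x t) ^ 6
        - 12 * a * pX v x t * pX (pX v) x t / (v x t) ^ 7
        + 21 * a * (pX v x t) ^ 3 / (v x t) ^ 8 + β₃ * pX v x t := by
  intro x t
  set c : ℝ := β₃ * (L - L ^ 3) with hc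
  have hF : ContDiff ℝ (⊤ : ℕ∞) (Function.uncurry u) := hu
  set F : ℝ × ℝ → ℝ := Function.uncurry u with hFdef
  have hP1s : ContDiff ℝ (⊤ : ℕ∞) (fun p : ℝ × ℝ => fderiv ℝ F p (1, 0)) :=
    (hF.fderiv_right (by simp)).clm_apply contDiff_const
  set P1 : ℝ × ℝ → ℝ := fun p => fderiv ℝ F p (1, 0) with hP1def
  have hP2s : ContDiff ℝ (⊤ : ℕ∞) (fun p : ℝ × ℝ => fderiv ℝ P1 p (1, 0)) :=
    (hP1s.fderiv_right (by simp)).clm_apply contDiff_const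
  set P2 : ℝ × ℝ → ℝ := fun p => fderiv ℝ P1 p (1, 0) with hP2def
  set P3 : ℝ × ℝ → ℝ := fun p => fderiv ℝ P2 p (1, 0) with hP3def
  set Q : ℝ × ℝ → ℝ := fun p => fderiv ℝ F p (0, 1) with hQdef
  -- partial derivatives of u
  have hux : ∀ X T, pX u X T = P1 (X, T) := fun X T => (hasDerivAt_slice_x hF X T).deriv
  have huxx : ∀ X T, pX (pX u) X T = P2 (X, T) := by
    intro X T
    show deriv (fun y => pX u y T) X = _
    rw [show (fun y => pX u y T) = (fun y => P1 (y, T)) from funext fun y => hux y T]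
    exact (hasDerivAt_slice_x hP1s X T).deriv
  have huxxx : ∀ X T, pX (pX (pX u)) X T = P3 (X, T) := by
    intro X T
    show deriv (fun y => pX (pX u) y T) X = _
    rw [show (fun y => pX (pX u) y T) = (fun y => P2 (y, T)) from funext fun y => huxx y T]
    exact (hasDerivAt_slice_x hP2s X T).deriv
  have hut : ∀ X T, pT u X T = Q (X, T) := fun X T => (hasDerivAt_slice_t hF X T).deriv
  -- derivatives of v
  have hvF : ∀ x t, v x t = F (L * x + c * t, L ^ 3 * t) := fun x t => hv x t
  have hvx : ∀ x t, pX v x t = L * P1 (L * x + c * t, L ^ 3 * t) := by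
    intro x t
    show deriv (fun y => v y t) x = _
    rw [show (fun y => v y t) = (fun y => F (L * y + c * t, L ^ 3 * t)) from
      funext fun y => hvF y t]
    exact (hasDerivAt_scaled_x hF L c x t).deriv
  have hvxx : ∀ x t, pX (pX v) x t = L * (L * P2 (L * x + c * t, L ^ 3 * t)) := by
    intro x t
    show deriv (fun y => pX v y t) x = _
    rw [show (fun y => pX v y t) = (fun y => L * P1 (L * y + c * t, L ^ 3 * t)) from
      funext fun y => hvx y t]
    exact ((hasDerivAt_scaled_x hP1s L c x t).const_mul L).deriv
  have hvxxx : ∀ x t, pX (pX (pX v)) x t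
      = L * (L * (L * P3 (L * x + c * t, L ^ 3 * t))) := by
    intro x t
    show deriv (fun y => pX (pX v) y t) x = _
    rw [show (fun y => pX (pX v) y t)
        = (fun y => L * (L * P2 (L * y + c * t, L ^ 3 * t))) from
      funext fun y => hvxx y t]
    exact (((hasDerivAt_scaled_x hP2s L c x t).const_mul L).const_mul L).deriv
  have hvt : pT v x t = c * P1 (L * x + c * t, L ^ 3 * t)
      + L ^ 3 * Q (L * x + c * t, L ^ 3 * t) := by
    show deriv (fun s => v x s) t = _
    rw [show (fun s => v x s) = (fun s => F (L * x + c * s, L ^ 3 * s)) from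
      funext fun s => hvF x s]
    exact (hasDerivAt_scaled_t hF L c x t).deriv
  -- the PDE at the transformed point
  have hQ : Q (L * x + c * t, L ^ 3 * t)
      = a * P3 (L * x + c * t, L ^ 3 * t) / (u (L * x + c * t) (L ^ 3 * t)) ^ 6
        - 12 * a * P1 (L * x + c * t, L ^ 3 * t) * P2 (L * x + c * t, L ^ 3 * t)
            / (u (L * x + c * t) (L ^ 3 * t)) ^ 7
        + 21 * a * (P1 (L * x + c * t, L ^ 3 * t)) ^ 3
            / (u (L * x + c * t) (L ^ 3 * t)) ^ 8
        + β₃ * P1 (L * x + c * t, L ^ 3 * t) := by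
    rw [← hut, ← hux, ← huxx, ← huxxx]
    exact hpde _ _
  rw [hvt, hvx, hvxx, hvxxx, hQ, hv x t, hc]
  ring
end

section
/- Let F(u, u_x, u_{xx}, u_{xxx}) = -2 u u_x - ∂_x³(u²) = -2uu_x - 6u_xu_{xx} - 2uu_{xxx} be the right-hand side of the K(2,2) equation written as u_t = F. Then ∂F/∂u_{xxx} = -2u, and there is no differential function σ(x, u, u_x, ..., u_k) (depending on finitely many x-derivatives of u) such that, after substituting u_t = F and its differential consequences, D_t( u^{-1/3} ) = D_x σ holds identically for all positive u. Equivalently, the variational derivative (Euler operator in u) of the differential function obtained from D_t(u^{-1/3}) by substituting u_t = F is not identically zero. -/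
open Real intervalIntegral Set Function
open scoped ContDiff

namespace Stmt17Aux

/-- derivative is periodic if the function is -/
lemma periodic_deriv {f : ℝ → ℝ} {T : ℝ} (hf : Function.Periodic f T) :
    Function.Periodic (deriv f) T := by
  intro x
  have : (fun y => f (y + T)) = f := funext fun y => hf y
  rw [← deriv_comp_add_const (f := f) (a := T)]
  rw [this]

lemma periodic_iterate_deriv {f : ℝ → ℝ} {T : ℝ} (hf : Function.Periodic f T) (i : ℕ) :
    Function.Periodic (deriv^[i] f) T := by
  induction i with
  | zero => exact hf
  | succ i ih =>
    rw [Function.iterate_succ_apply']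
    exact periodic_deriv ih

lemma iterate_deriv_const (c : ℝ) (i : ℕ) (hi : 1 ≤ i) :
    deriv^[i] (fun _ : ℝ => c) = fun _ => (0:ℝ) := by
  induction i with
  | zero => omega
  | succ i ih =>
    rw [Function.iterate_succ_apply']
    rcases Nat.eq_zero_or_pos i with h0 | h1
    · subst h0; simp
    · rw [ih h1]; simp

/-- flatness: iterated derivatives of ((1-cos x)/2)^p * g x vanish at 0 for i < p -/
lemma flat_aux (i : ℕ) : ∀ (p : ℕ) (g : ℝ → ℝ), ContDiff ℝ ∞ g → i < p →
    deriv^[i] (fun x => ((1 - Real.cos x)/2)^p * g x) 0 = 0 := by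
  induction i with
  | zero =>
    intro p g _ hp
    simp only [Function.iterate_zero, id_eq]
    rw [Real.cos_zero]
    simp [zero_pow (by omega : p ≠ 0)]
  | succ i ih =>
    intro p g hg hp
    obtain ⟨q, rfl⟩ : ∃ q, p = q + 1 := ⟨p - 1, by omega⟩
    have hA : ∀ x : ℝ, HasDerivAt (fun y => (1 - Real.cos y)/2) (Real.sin x / 2) x := by
      intro x
      simpa using ((Real.hasDerivAt_cos x).const_sub 1).div_const 2
    have hgd : ∀ x : ℝ, HasDerivAt g (deriv g x) x := fun x =>
      ((hg.differentiable (by simp)) x).hasDerivAt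
    have hder : deriv (fun x => ((1 - Real.cos x)/2)^(q+1) * g x)
        = fun x => ((1 - Real.cos x)/2)^q *
            ((q+1 : ℝ) * (Real.sin x / 2) * g x + ((1 - Real.cos x)/2) * deriv g x) := by
      funext x
      have h1 : HasDerivAt (fun y => ((1 - Real.cos y)/2)^(q+1))
          ((q+1 : ℕ) * ((1 - Real.cos x)/2)^(q+1-1) * (Real.sin x / 2)) x := (hA x).pow (q+1)
      have h2 := h1.mul (hgd x)
      rw [HasDerivAt.deriv (f := fun x => ((1 - Real.cos x)/2)^(q+1) * g x) h2]
      push_cast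
      ring
    rw [Function.iterate_succ_apply, hder]
    have hgder : ContDiff ℝ ∞ (deriv g) := (contDiff_infty_iff_deriv.mp hg).2
    have hG : ContDiff ℝ ∞ (fun x => (q+1 : ℝ) * (Real.sin x / 2) * g x
        + ((1 - Real.cos x)/2) * deriv g x) := by
      apply ContDiff.add
      · exact (contDiff_const.mul (Real.contDiff_sin.div_const 2)).mul hg
      · exact ((contDiff_const.sub Real.contDiff_cos).div_const 2).mul hgder
    exact ih q _ hG (by omega)


noncomputable def A : ℝ → ℝ := fun x => (1 - Real.cos x)/2
noncomputable def V (M : ℕ) : ℝ → ℝ := fun x => A x ^ M * Real.sin x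
noncomputable def DV (M : ℕ) : ℝ → ℝ :=
  fun x => A x ^M * ((M:ℝ) + ((M:ℝ)+1) * Real.cos x)

lemma hasDerivAt_A (x : ℝ) : HasDerivAt A (Real.sin x / 2) x := by
  unfold A
  simpa using ((Real.hasDerivAt_cos x).const_sub 1).div_const 2

lemma A_mem (x : ℝ) : 0 ≤ A x ∧ A x ≤ 1 := by
  have h1 := Real.neg_one_le_cos x
  have h2 := Real.cos_le_one x
  constructor <;> [unfold A; unfold A] <;> [linarith; linarith]

lemma abs_V_le (M : ℕ) (x : ℝ) : |V M x| ≤ 1 := by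
  have hA := A_mem x
  have : |A x ^ M| ≤ 1 := by
    rw [abs_pow, abs_of_nonneg hA.1]
    exact pow_le_one₀ hA.1 hA.2
  calc |V M x| = |A x ^ M| * |Real.sin x| := abs_mul _ _
    _ ≤ 1 * 1 := mul_le_mul this (Real.abs_sin_le_one x) (abs_nonneg _) one_pos.le
    _ = 1 := by ring

lemma hasDerivAt_V (m : ℕ) (x : ℝ) : HasDerivAt (V (m+1)) (DV (m+1) x) x := by
  have h1 : HasDerivAt (fun y => A y ^ (m+1))
      (((m:ℕ)+1 : ℕ) * A x ^ (m+1-1) * (Real.sin x / 2)) x := (hasDerivAt_A x).pow (m+1)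
  have h2 := h1.mul (Real.hasDerivAt_sin x)
  refine h2.congr_deriv (Eq.symm ?_)
  unfold DV A
  simp only [Nat.succ_sub_one]
  push_cast
  linear_combination (-((((m:ℝ)+1) * ((1-Real.cos x)/2)^m) / 2)) * (Real.sin_sq_add_cos_sq x)



lemma Srec (n : ℕ) : (∫ x in (0:ℝ)..π, Real.sin x^(n+2))
    = ((n:ℝ)+1)/((n:ℝ)+2) * ∫ x in (0:ℝ)..π, Real.sin x^n := by
  have h := integral_sin_pow (a := 0) (b := π) n
  rw [h, Real.sin_zero, Real.sin_pi]
  rw [zero_pow (by omega : n + 1 ≠ 0)]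
  ring

lemma DV_cube_at_double (M : ℕ) (t : ℝ) :
    DV M (2*t) ^ 3 = (2*(M:ℝ)+1)^3 * Real.sin t^(6*M)
      - 3*(2*(M:ℝ)+1)^2*(2*(M:ℝ)+2) * Real.sin t^(6*M+2)
      + 3*(2*(M:ℝ)+1)*(2*(M:ℝ)+2)^2 * Real.sin t^(6*M+4)
      - (2*(M:ℝ)+2)^3 * Real.sin t^(6*M+6) := by
  have hc : Real.cos (2*t) = 1 - 2*Real.sin t^2 := by
    rw [Real.cos_two_mul, Real.cos_sq']; ring
  have hs : (1 - Real.cos (2*t))/2 = Real.sin t ^ 2 := by rw [hc]; ring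
  unfold DV A
  rw [hs, hc, ← pow_mul]
  have e2 : Real.sin t ^ (6*M+2) = Real.sin t ^ (2*M) * Real.sin t ^ (2*M) * Real.sin t ^ (2*M) * Real.sin t ^ 2 := by
    rw [← pow_add, ← pow_add, ← pow_add]; congr 1; ring
  have e0 : Real.sin t ^ (6*M) = Real.sin t ^ (2*M) * Real.sin t ^ (2*M) * Real.sin t ^ (2*M) := by
    rw [← pow_add, ← pow_add]; congr 1; ring
  have e4 : Real.sin t ^ (6*M+4) = Real.sin t ^ (2*M) * Real.sin t ^ (2*M) * Real.sin t ^ (2*M) * Real.sin t ^ 2 * Real.sin t ^ 2 := by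
    rw [← pow_add, ← pow_add, ← pow_add, ← pow_add]; congr 1; ring
  have e6 : Real.sin t ^ (6*M+6) = Real.sin t ^ (2*M) * Real.sin t ^ (2*M) * Real.sin t ^ (2*M) * Real.sin t ^ 2 * Real.sin t ^ 2 * Real.sin t ^ 2 := by
    rw [← pow_add, ← pow_add, ← pow_add, ← pow_add, ← pow_add]; congr 1; ring
  rw [e0, e2, e4, e6]
  ring

lemma integral_DV_cube_neg (m : ℕ) :
    (∫ x in (0:ℝ)..(2*π), (DV (m+1) x)^3) < 0 := by
  set M := m + 1 with hM
  have hMR : (1:ℝ) ≤ (M:ℝ) := by exact_mod_cast Nat.one_le_iff_ne_zero.mpr (by omega)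
  -- change of variables
  have hcomp := integral_comp_mul_left (a := (0:ℝ)) (b := π)
    (f := fun x => DV M x ^ 3) (c := 2) two_ne_zero
  have h2 : (∫ x in (0:ℝ)..(2*π), (DV M x)^3)
      = 2 * ∫ t in (0:ℝ)..π, DV M (2*t) ^ 3 := by
    rw [hcomp]
    norm_num
    ring
  rw [h2]
  set a : ℝ := 2*(M:ℝ)+1
  set b : ℝ := 2*(M:ℝ)+2
  have hcont : ∀ j : ℕ, IntervalIntegrable (fun t : ℝ => Real.sin t ^ j)
      MeasureTheory.volume 0 π := fun j => (by fun_prop : Continuous fun t : ℝ => Real.sin t ^ j).intervalIntegrable _ _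
  have h3 : (∫ t in (0:ℝ)..π, DV M (2*t) ^ 3)
      = a^3 * (∫ t in (0:ℝ)..π, Real.sin t^(6*M))
        - 3*a^2*b * (∫ t in (0:ℝ)..π, Real.sin t^(6*M+2))
        + 3*a*b^2 * (∫ t in (0:ℝ)..π, Real.sin t^(6*M+4))
        - b^3 * (∫ t in (0:ℝ)..π, Real.sin t^(6*M+6)) := by
    rw [← intervalIntegral.integral_const_mul, ← intervalIntegral.integral_const_mul,
        ← intervalIntegral.integral_const_mul, ← intervalIntegral.integral_const_mul,
        ← intervalIntegral.integral_sub ((hcont _).const_mul _) ((hcont _).const_mul _),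
        ← intervalIntegral.integral_add (((hcont _).const_mul _).sub ((hcont _).const_mul _)) ((hcont _).const_mul _),
        ← intervalIntegral.integral_sub ((((hcont _).const_mul _).sub ((hcont _).const_mul _)).add ((hcont _).const_mul _)) ((hcont _).const_mul _)]
    apply intervalIntegral.integral_congr
    intro t _
    exact DV_cube_at_double M t
  rw [h3]
  set S := ∫ t in (0:ℝ)..π, Real.sin t^(6*M) with hS
  have hSpos : 0 < S := integral_sin_pow_pos _
  have r1 : (∫ t in (0:ℝ)..π, Real.sin t^(6*M+2)) = ((6*(M:ℝ)+1)/(6*(M:ℝ)+2)) * S := by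
    have := Srec (6*M); push_cast at this ⊢; convert this using 3 <;> ring
  have r2 : (∫ t in (0:ℝ)..π, Real.sin t^(6*M+4))
      = ((6*(M:ℝ)+3)/(6*(M:ℝ)+4)) * (((6*(M:ℝ)+1)/(6*(M:ℝ)+2)) * S) := by
    rw [← r1]
    have := Srec (6*M+2); push_cast at this ⊢
    convert this using 3 <;> ring
  have r3 : (∫ t in (0:ℝ)..π, Real.sin t^(6*M+6))
      = ((6*(M:ℝ)+5)/(6*(M:ℝ)+6)) * (((6*(M:ℝ)+3)/(6*(M:ℝ)+4)) * (((6*(M:ℝ)+1)/(6*(M:ℝ)+2)) * S)) := by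
    rw [← r2]
    have := Srec (6*M+4); push_cast at this ⊢
    convert this using 3 <;> ring
  rw [r1, r2, r3]
  set x : ℝ := (M:ℝ)
  have hx : (1:ℝ) ≤ x := hMR
  have key : a^3 * S - 3*a^2*b*(((6*x+1)/(6*x+2))*S) + 3*a*b^2*((6*x+3)/(6*x+4)*((6*x+1)/(6*x+2)*S))
      - b^3*((6*x+5)/(6*x+6)*((6*x+3)/(6*x+4)*((6*x+1)/(6*x+2)*S)))
      = S * (-48*x*(x+1)*(2*x+1)) / ((6*x+2)*(6*x+4)*(6*x+6)) := by
    have d1 : (6*x+2) ≠ 0 := by positivity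
    have d2 : (6*x+4) ≠ 0 := by positivity
    have d3 : (6*x+6) ≠ 0 := by positivity
    field_simp
    ring
  rw [key]
  apply mul_neg_of_pos_of_neg two_pos
  apply div_neg_of_neg_of_pos
  · have : 0 < 48*x*(x+1)*(2*x+1) := by positivity
    nlinarith [hSpos]
  · positivity

lemma main_eq (k : ℕ) (σ : ℝ → (Fin (k + 1) → ℝ) → ℝ)
    (hσ : ContDiff ℝ (⊤ : ℕ∞) (Function.uncurry σ))
    (hmain : ∀ u : ℝ → ℝ, ContDiff ℝ (⊤ : ℕ∞) u → (∀ x, 0 < u x) →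
      ∀ x : ℝ, -(1 / 3) * (u x) ^ (-(4 : ℝ) / 3) *
          (-2 * u x * deriv u x - 6 * deriv u x * deriv (deriv u) x
            - 2 * u x * deriv (deriv (deriv u)) x)
        = deriv (fun y => σ y (fun i => deriv^[(i : ℕ)] u y)) x)
    (w : ℝ → ℝ) (hw : ContDiff ℝ (⊤ : ℕ∞) w)
    (hpos : ∀ x, (3:ℝ) ≤ w x)
    (hper : Function.Periodic w (2*π))
    (hjet : ∀ i : ℕ, i ≤ k → deriv^[i] (fun x => w x ^ 6) 0 = (if i = 0 then (4:ℝ)^6 else 0)) :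
    σ (2*π) (fun i : Fin (k+1) => if (i:ℕ) = 0 then (4:ℝ)^6 else 0)
      - σ 0 (fun i : Fin (k+1) => if (i:ℕ) = 0 then (4:ℝ)^6 else 0)
      = 320 * ∫ x in (0:ℝ)..(2*π), w x * (deriv w x)^3 := by
  have h1top : (1 : WithTop ℕ∞) ≤ ∞ := by exact_mod_cast le_top
  set u : ℝ → ℝ := fun x => w x ^ 6 with hu_def
  have hu : ContDiff ℝ (⊤ : ℕ∞) u := hw.pow 6
  have hwpos : ∀ x, (0:ℝ) < w x := fun x => lt_of_lt_of_le three_pos (hpos x)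
  have hupos : ∀ x, (0:ℝ) < u x := fun x => pow_pos (hwpos x) 6
  have hw8 : ∀ x, w x ≠ 0 := fun x => (hwpos x).ne'
  have hwS : ContDiff ℝ ∞ w := hw.of_le (by simp)
  have huS : ContDiff ℝ ∞ u := hu.of_le (by simp)
  have hw1 : ContDiff ℝ ∞ (deriv w) := (contDiff_infty_iff_deriv.mp hwS).2
  have hw2 : ContDiff ℝ ∞ (deriv (deriv w)) := (contDiff_infty_iff_deriv.mp hw1).2
  have hw3 : ContDiff ℝ ∞ (deriv (deriv (deriv w))) := (contDiff_infty_iff_deriv.mp hw2).2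
  have hd1 : ∀ x, HasDerivAt w (deriv w x) x := fun x =>
    ((hwS.differentiable (by simp)) x).hasDerivAt
  have hd2 : ∀ x, HasDerivAt (deriv w) (deriv (deriv w) x) x := fun x =>
    ((hw1.differentiable (by simp)) x).hasDerivAt
  have hd3 : ∀ x, HasDerivAt (deriv (deriv w)) (deriv (deriv (deriv w)) x) x := fun x =>
    ((hw2.differentiable (by simp)) x).hasDerivAt
  -- derivative formulas for u
  have hu1 : deriv u = fun x => 6 * w x^5 * deriv w x := by
    funext x
    have h := (hd1 x).pow 6
    rw [HasDerivAt.deriv (f := u) h]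
    norm_num
  have hu2 : deriv (deriv u) = fun x =>
      30 * w x^4 * (deriv w x)^2 + 6 * w x^5 * deriv (deriv w) x := by
    rw [hu1]; funext x
    have h := (((hd1 x).pow 5).const_mul (6:ℝ)).mul (hd2 x)
    rw [HasDerivAt.deriv (f := fun x => 6 * w x^5 * deriv w x) h]
    simp only [Pi.pow_apply]
    push_cast
    ring
  have hu3 : deriv (deriv (deriv u)) = fun x =>
      120 * w x^3 * (deriv w x)^3 + 90 * w x^4 * deriv w x * deriv (deriv w) x
        + 6 * w x^5 * deriv (deriv (deriv w)) x := by
    rw [hu2]; funext x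
    have ha := (((hd1 x).pow 4).const_mul (30:ℝ)).mul ((hd2 x).pow 2)
    have hb := (((hd1 x).pow 5).const_mul (6:ℝ)).mul (hd3 x)
    have h := ha.add hb
    rw [HasDerivAt.deriv (f := fun x => 30 * w x^4 * (deriv w x)^2 + 6 * w x^5 * deriv (deriv w) x) h]
    simp only [Pi.pow_apply]
    push_cast
    ring
  -- exact part
  set ψ : ℝ → ℝ := fun x => 4*w x^3*deriv w x + 120*w x*(deriv w x)^3
      + 132*w x^2*(deriv w x)*(deriv (deriv w) x) + 4*w x^3*(deriv (deriv (deriv w)) x)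
    with hψ_def
  set Ψ : ℝ → ℝ := fun x => w x^4 + 60*w x^2*(deriv w x)^2 + 4*w x^3*(deriv (deriv w) x)
    with hΨ_def
  have hΨd : ∀ x, HasDerivAt Ψ (ψ x) x := by
    intro x
    have h1 := (hd1 x).pow 4
    have h2 := (((hd1 x).pow 2).const_mul (60:ℝ)).mul ((hd2 x).pow 2)
    have h3 := (((hd1 x).pow 3).const_mul (4:ℝ)).mul (hd3 x)
    have h : HasDerivAt Ψ _ x := (h1.add h2).add h3
    convert h using 1
    simp only [Pi.pow_apply]
    push_cast
    ring
  -- pointwise identity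
  have hLHS : ∀ x, -(1 / 3) * (u x) ^ (-(4 : ℝ) / 3) *
      (-2 * u x * deriv u x - 6 * deriv u x * deriv (deriv u) x
        - 2 * u x * deriv (deriv (deriv u)) x)
      = ψ x + 320 * (w x * (deriv w x)^3) := by
    intro x
    have hrp : (u x) ^ (-(4 : ℝ) / 3) = (w x^8)⁻¹ := by
      show ((w x ^ (6:ℕ) : ℝ)) ^ (-(4 : ℝ) / 3) = _
      rw [← Real.rpow_natCast (w x) 6, ← Real.rpow_mul (hwpos x).le]
      rw [show ((6:ℕ):ℝ) * (-(4:ℝ)/3) = -((8:ℕ):ℝ) by norm_num]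
      rw [Real.rpow_neg (hwpos x).le, Real.rpow_natCast]
    rw [hu3, hu2, hu1, hrp]
    simp only [hu_def, hψ_def]
    have hne := hw8 x
    field_simp
    ring
  -- continuity
  have cw : Continuous w := hwS.continuous
  have cw1 : Continuous (deriv w) := hw1.continuous
  have cw2 : Continuous (deriv (deriv w)) := hw2.continuous
  have cw3 : Continuous (deriv (deriv (deriv w))) := hw3.continuous
  have hcψ : Continuous ψ := by
    rw [hψ_def]; fun_prop
  have hcrem : Continuous (fun x => w x * (deriv w x)^3) := by fun_prop
  -- the sigma side
  set g : ℝ → ℝ := fun y => σ y (fun i : Fin (k+1) => deriv^[(i : ℕ)] u y) with hg_def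
  have hg : ContDiff ℝ ∞ g := by
    have hjets : ContDiff ℝ ∞ (fun y => (y, fun i : Fin (k+1) => deriv^[(i : ℕ)] u y)) :=
      contDiff_id.prodMk (contDiff_pi.mpr fun i => ContDiff.iterate_deriv (i : ℕ) huS)
    exact (hσ.of_le (by simp)).comp hjets
  have happ := hmain u hu hupos
  have hIg : (∫ x in (0:ℝ)..(2*π), deriv g x) = g (2*π) - g 0 := by
    apply intervalIntegral.integral_deriv_eq_sub
    · intro x _
      exact (hg.differentiable (by simp)).differentiableAt
    · exact (hg.continuous_deriv h1top).intervalIntegrable _ _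
  have hI1 : (∫ x in (0:ℝ)..(2*π), (ψ x + 320 * (w x * (deriv w x)^3)))
      = g (2*π) - g 0 := by
    rw [← hIg]
    apply intervalIntegral.integral_congr
    intro x _
    exact ((hLHS x).symm.trans (happ x))
  have hIψ : (∫ x in (0:ℝ)..(2*π), ψ x) = Ψ (2*π) - Ψ 0 :=
    intervalIntegral.integral_eq_sub_of_hasDerivAt (fun x _ => hΨd x)
      (hcψ.intervalIntegrable _ _)
  have hΨper : Ψ (2*π) = Ψ 0 := by
    have e0 : w (2*π) = w 0 := by simpa using hper 0
    have e1 : deriv w (2*π) = deriv w 0 := by simpa using (periodic_deriv hper) 0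
    have e2 : deriv (deriv w) (2*π) = deriv (deriv w) 0 := by
      simpa using (periodic_deriv (periodic_deriv hper)) 0
    rw [hΨ_def]
    simp only [e0, e1, e2]
  have hsplit : (∫ x in (0:ℝ)..(2*π), (ψ x + 320 * (w x * (deriv w x)^3)))
      = (∫ x in (0:ℝ)..(2*π), ψ x)
        + 320 * ∫ x in (0:ℝ)..(2*π), w x * (deriv w x)^3 := by
    rw [← intervalIntegral.integral_const_mul,
      intervalIntegral.integral_add (f := ψ) (g := fun x => 320 * (w x * (deriv w x)^3)) (hcψ.intervalIntegrable _ _)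
        ((continuous_const.mul hcrem).intervalIntegrable _ _)]
  -- jets at the endpoints
  have huper : Function.Periodic u (2*π) := fun x => by
    simp only [hu_def]; rw [hper x]
  have hjet0 : (fun i : Fin (k+1) => deriv^[(i : ℕ)] u 0)
      = (fun i : Fin (k+1) => if (i:ℕ) = 0 then (4:ℝ)^6 else 0) := by
    funext i
    exact hjet (i : ℕ) (Nat.lt_succ_iff.mp i.isLt)
  have hjet2 : (fun i : Fin (k+1) => deriv^[(i : ℕ)] u (2*π))
      = (fun i : Fin (k+1) => if (i:ℕ) = 0 then (4:ℝ)^6 else 0) := by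
    funext i
    have hp := (periodic_iterate_deriv huper (i : ℕ)) 0
    rw [zero_add] at hp
    rw [hp]
    exact hjet (i : ℕ) (Nat.lt_succ_iff.mp i.isLt)
  have hgval : g (2*π) - g 0
      = σ (2*π) (fun i : Fin (k+1) => if (i:ℕ) = 0 then (4:ℝ)^6 else 0)
        - σ 0 (fun i : Fin (k+1) => if (i:ℕ) = 0 then (4:ℝ)^6 else 0) := by
    rw [hg_def]
    simp only [hjet0, hjet2]
  rw [← hgval, ← hI1, hsplit, hIψ, hΨper]
  ring


lemma V_periodic (M : ℕ) : Function.Periodic (V M) (2*π) := by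
  intro x
  unfold V A
  rw [Real.cos_add_two_pi, Real.sin_add_two_pi]

lemma V_zero (M : ℕ) : V M 0 = 0 := by
  unfold V
  simp [Real.sin_zero]

lemma contDiff_A : ContDiff ℝ (⊤ : ℕ∞) A := (contDiff_const.sub Real.contDiff_cos).div_const 2

lemma contDiff_V (M : ℕ) : ContDiff ℝ (⊤ : ℕ∞) (V M) := (contDiff_A.pow M).mul Real.contDiff_sin

lemma continuous_DV (M : ℕ) : Continuous (DV M) := by
  have : ContDiff ℝ (⊤ : ℕ∞) (DV M) :=
    (contDiff_A.pow M).mul (contDiff_const.add (contDiff_const.mul Real.contDiff_cos))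
  exact this.continuous

lemma jet_flat (k : ℕ) (ε : ℝ) :
    ∀ i : ℕ, i ≤ k → deriv^[i] (fun x => (4 + ε * V (k+1) x) ^ 6) 0
      = (if i = 0 then (4:ℝ)^6 else 0) := by
  intro i hik
  set M := k + 1 with hM
  rcases Nat.eq_zero_or_pos i with h0 | h1
  · subst h0
    simp only [Function.iterate_zero, id_eq, if_pos rfl]
    rw [V_zero]
    norm_num
  · rw [if_neg (by omega)]
    -- rewrite as constant + A^M * G
    set P : ℝ → ℝ := fun x => ε * (A x ^ M * Real.sin x) with hP_def
    set G : ℝ → ℝ := fun x => ε * Real.sin x *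
        (6144 + P x * (3840 + P x * (1280 + P x * (240 + P x * (24 + P x))))) with hG_def
    have hfe : (fun x => (4 + ε * V M x) ^ 6) = (fun x => 4096 + A x ^ M * G x) := by
      funext x
      show (4 + ε * (A x ^ M * Real.sin x)) ^ 6 = _
      rw [hG_def, hP_def]
      ring
    have hAS : ContDiff ℝ ∞ A := contDiff_A.of_le (by simp)
    have hPS : ContDiff ℝ ∞ P := by
      rw [hP_def]
      exact contDiff_const.mul ((hAS.pow M).mul Real.contDiff_sin)
    have hGS : ContDiff ℝ ∞ G := by
      rw [hG_def]
      refine (contDiff_const.mul Real.contDiff_sin).mul ?_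
      refine contDiff_const.add (hPS.mul ?_)
      refine contDiff_const.add (hPS.mul ?_)
      refine contDiff_const.add (hPS.mul ?_)
      refine contDiff_const.add (hPS.mul ?_)
      exact contDiff_const.add hPS
    rw [hfe]
    obtain ⟨j, rfl⟩ : ∃ j, i = j + 1 := ⟨i - 1, by omega⟩
    rw [Function.iterate_succ_apply]
    have hd : deriv (fun x => 4096 + A x ^ M * G x) = deriv (fun x => A x ^ M * G x) :=
      funext fun y => deriv_const_add _
    rw [hd, ← Function.iterate_succ_apply]
    exact flat_aux (j+1) M G hGS (by omega)

theorem final_contradiction (k : ℕ) (σ : ℝ → (Fin (k + 1) → ℝ) → ℝ)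
    (hσ : ContDiff ℝ (⊤ : ℕ∞) (Function.uncurry σ))
    (hmain : ∀ u : ℝ → ℝ, ContDiff ℝ (⊤ : ℕ∞) u → (∀ x, 0 < u x) →
      ∀ x : ℝ, -(1 / 3) * (u x) ^ (-(4 : ℝ) / 3) *
          (-2 * u x * deriv u x - 6 * deriv u x * deriv (deriv u) x
            - 2 * u x * deriv (deriv (deriv u)) x)
        = deriv (fun y => σ y (fun i => deriv^[(i : ℕ)] u y)) x) : False := by
  -- generic facts about the three test functions
  have hwc : ∀ ε : ℝ, ContDiff ℝ (⊤ : ℕ∞) (fun x => 4 + ε * V (k+1) x) :=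
    fun ε => contDiff_const.add (contDiff_const.mul (contDiff_V (k+1)))
  have hwpos : ∀ ε : ℝ, |ε| ≤ 1 → ∀ x, (3:ℝ) ≤ 4 + ε * V (k+1) x := by
    intro ε hε x
    have h1 : |ε * V (k+1) x| ≤ 1 := by
      rw [abs_mul]
      exact mul_le_one₀ hε (abs_nonneg _) (abs_V_le (k+1) x)
    have := abs_le.mp h1
    linarith [this.1]
  have hwper : ∀ ε : ℝ, Function.Periodic (fun x => 4 + ε * V (k+1) x) (2*π) := by
    intro ε x
    simp only []
    rw [V_periodic (k+1) x]
  have hderivw : ∀ ε : ℝ, deriv (fun x => 4 + ε * V (k+1) x) = fun x => ε * DV (k+1) x :=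
    fun ε => funext fun x => (((hasDerivAt_V k x).const_mul ε).const_add 4).deriv
  -- constant test function
  have hconstjet : ∀ i : ℕ, i ≤ k → deriv^[i] (fun x => (fun _ : ℝ => (4:ℝ)) x ^ 6) 0
      = (if i = 0 then (4:ℝ)^6 else 0) := by
    intro i _
    show deriv^[i] (fun _ : ℝ => (4:ℝ)^6) 0 = _
    rcases Nat.eq_zero_or_pos i with h0 | h1
    · subst h0; simp
    · rw [iterate_deriv_const _ i h1, if_neg (by omega)]
  have hconst := main_eq k σ hσ hmain (fun _ => (4:ℝ)) contDiff_const
    (fun x => by norm_num) (fun x => rfl) hconstjet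
  have hderivconst : deriv (fun _ : ℝ => (4:ℝ)) = fun _ => (0:ℝ) :=
    funext fun x => deriv_const x 4
  rw [hderivconst] at hconst
  have hzero : (∫ x in (0:ℝ)..(2*π), (fun _ : ℝ => (4:ℝ)) x * ((fun _ : ℝ => (0:ℝ)) x)^3) = 0 := by
    simp
  rw [hzero, mul_zero] at hconst
  -- epsilon = 1
  have hplus := main_eq k σ hσ hmain (fun x => 4 + 1 * V (k+1) x) (hwc 1)
    (hwpos 1 (by norm_num)) (hwper 1) (jet_flat k 1)
  rw [hderivw 1, hconst] at hplus
  have hE1 : (∫ x in (0:ℝ)..(2*π), (4 + V (k+1) x) * (DV (k+1) x)^3) = 0 := by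
    have h := hplus.symm
    have hcong : (∫ x in (0:ℝ)..(2*π), (fun x => 4 + 1 * V (k+1) x) x * ((fun x => 1 * DV (k+1) x) x)^3)
        = ∫ x in (0:ℝ)..(2*π), (4 + V (k+1) x) * (DV (k+1) x)^3 := by
      apply intervalIntegral.integral_congr
      intro x _
      simp only []
      ring
    rw [hcong] at h
    linarith
  -- epsilon = -1
  have hminus := main_eq k σ hσ hmain (fun x => 4 + (-1) * V (k+1) x) (hwc (-1))
    (hwpos (-1) (by norm_num)) (hwper (-1)) (jet_flat k (-1))
  rw [hderivw (-1), hconst] at hminus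
  have hE2 : (∫ x in (0:ℝ)..(2*π), (4 - V (k+1) x) * (DV (k+1) x)^3) = 0 := by
    have h := hminus.symm
    have hcong : (∫ x in (0:ℝ)..(2*π), (fun x => 4 + (-1) * V (k+1) x) x * ((fun x => (-1) * DV (k+1) x) x)^3)
        = ∫ x in (0:ℝ)..(2*π), -((4 - V (k+1) x) * (DV (k+1) x)^3) := by
      apply intervalIntegral.integral_congr
      intro x _
      simp only []
      ring
    rw [hcong, intervalIntegral.integral_neg] at h
    linarith
  -- combine
  have hcV : Continuous (V (k+1)) := (contDiff_V (k+1)).continuous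
  have hcDV := continuous_DV (k+1)
  have hint1 : IntervalIntegrable (fun x => (4 + V (k+1) x) * (DV (k+1) x)^3)
      MeasureTheory.volume 0 (2*π) :=
    ((continuous_const.add hcV).mul (hcDV.pow 3)).intervalIntegrable _ _
  have hint2 : IntervalIntegrable (fun x => (4 - V (k+1) x) * (DV (k+1) x)^3)
      MeasureTheory.volume 0 (2*π) :=
    ((continuous_const.sub hcV).mul (hcDV.pow 3)).intervalIntegrable _ _
  have hsum := intervalIntegral.integral_add hint1 hint2
  rw [hE1, hE2] at hsum
  have hcong8 : (∫ x in (0:ℝ)..(2*π), ((4 + V (k+1) x) * (DV (k+1) x)^3 + (4 - V (k+1) x) * (DV (k+1) x)^3))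
      = ∫ x in (0:ℝ)..(2*π), 8 * (DV (k+1) x)^3 := by
    apply intervalIntegral.integral_congr
    intro x _
    ring
  rw [hcong8, intervalIntegral.integral_const_mul] at hsum
  have hfinal : (∫ x in (0:ℝ)..(2*π), (DV (k+1) x)^3) = 0 := by linarith
  have := integral_DV_cube_neg k
  rw [hfinal] at this
  exact lt_irrefl 0 this

end Stmt17Aux

theorem stmt17 :
    (∀ z0 z1 z2 z3 : ℝ,
      deriv (fun w => -2 * z0 * z1 - 6 * z1 * z2 - 2 * z0 * w) z3 = -2 * z0) ∧
    ¬ ∃ (k : ℕ) (σ : ℝ → (Fin (k + 1) → ℝ) → ℝ),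
        ContDiff ℝ (⊤ : ℕ∞) (Function.uncurry σ) ∧
        ∀ u : ℝ → ℝ, ContDiff ℝ (⊤ : ℕ∞) u → (∀ x, 0 < u x) →
          ∀ x : ℝ,
            -(1 / 3) * (u x) ^ (-(4 : ℝ) / 3) *
              (-2 * u x * deriv u x - 6 * deriv u x * deriv (deriv u) x
                - 2 * u x * deriv (deriv (deriv u)) x)
            = deriv (fun y => σ y (fun i => deriv^[(i : ℕ)] u y)) x := by
  constructor
  · intro z0 z1 z2 z3
    have h2 := ((hasDerivAt_id z3).const_mul (2*z0)).const_sub (-2*z0*z1 - 6*z1*z2)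
    have h4 : deriv (fun w : ℝ => -2 * z0 * z1 - 6 * z1 * z2 - 2 * z0 * w) z3 = -(2*z0*1) := by
      apply HasDerivAt.deriv
      simpa using h2
    rw [h4]; ring
  · rintro ⟨k, σ, hσ, hmain⟩
    exact Stmt17Aux.final_contradiction k σ hσ hmain
end
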